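/- Under the same hypotheses, for t ≥ 1: c_{2t−1}(y_∘) is proportional to y_∘ + (√r/ρ_r(2t−1))·y_•, and c_{2t}(y_∘) is proportional to y_∘ + (ρ_r(2t)/√r)·y_•. -/
import Mathlib


open Finset

/-- The partial Coxeter transformation: simultaneous reflection in all vertices
belonging to the part `P` of a bipartition. -/
def partCox {V : Type} [Fintype V] [DecidableEq V] (G : SimpleGraph V)
    [DecidableRel G.Adj] (P : V → Prop) [DecidablePred P] (x : V → ℝ) : V → ℝ :=
  fun v => if P v then -x v + ∑ h ∈ G.neighborFinset v, x h else x v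

/-- c_k (k > 0): the alternating word of length k in the partial Coxeter
transformations, with the rightmost factor c̄ (reflection in odd vertices). -/
def coxPos {V : Type} [Fintype V] [DecidableEq V] (G : SimpleGraph V)
    [DecidableRel G.Adj] (odd : V → Prop) [DecidablePred odd] :
    ℕ → (V → ℝ) → (V → ℝ)
  | 0 => id
  | k + 1 =>
      (if Even k then partCox G odd else partCox G (fun v => ¬ odd v)) ∘
        coxPos G odd k

/-- Coefficients `(a_k, b_k)` with `c_k(y_∘) = a_k y_∘ + b_k y_•`. -/
def coefAux (lam : ℝ) : ℕ → ℝ × ℝ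
  | 0 => (1, 0)
  | k + 1 =>
      if Even k then
        ((coefAux lam k).1, (coefAux lam k).1 * lam - (coefAux lam k).2)
      else
        ((coefAux lam k).2 * lam - (coefAux lam k).1, (coefAux lam k).2)

/-- For a connected bipartite graph with r = (ind G)² ≥ 4 and principal
eigenvector y: c_{2t−1}(y_∘) ≃ y_∘ + (√r/ρ_r(2t−1))·y_• and
c_{2t}(y_∘) ≃ y_∘ + (ρ_r(2t)/√r)·y_•. -/
theorem stmt_16 (V : Type) [Fintype V] [DecidableEq V]
    (G : SimpleGraph V) [DecidableRel G.Adj] (hG : G.Connected)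
    (odd : V → Prop) [DecidablePred odd]
    (hbip : ∀ u v : V, G.Adj u v → (odd u ↔ ¬ odd v))
    (lam : ℝ) (y : V → ℝ) (hy : ∀ v, 0 < y v)
    (heig : ∀ v, lam * y v = ∑ h ∈ G.neighborFinset v, y h)
    (r : ℝ) (hr : r = lam ^ 2) (hr4 : 4 ≤ r)
    (rho : ℕ → ℝ) (hrho0 : rho 0 = 0)
    (hrho : ∀ n : ℕ, rho (n + 1) = r / (r - rho n))
    (ybul ycirc : V → ℝ)
    (hybul : ∀ v, ybul v = if odd v then y v else 0)
    (hycirc : ∀ v, ycirc v = if odd v then 0 else y v) :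
    ∀ t : ℕ, 1 ≤ t →
      (∃ c : ℝ, c ≠ 0 ∧
        coxPos G odd (2 * t - 1) ycirc =
          c • (ycirc + (Real.sqrt r / rho (2 * t - 1)) • ybul)) ∧
      (∃ c : ℝ, c ≠ 0 ∧
        coxPos G odd (2 * t) ycirc =
          c • (ycirc + (rho (2 * t) / Real.sqrt r) • ybul)) := by
  rcases isEmpty_or_nonempty V with hV | hV
  · intro t ht
    exact ⟨⟨1, one_ne_zero, funext fun v => isEmptyElim v⟩,
      ⟨1, one_ne_zero, funext fun v => isEmptyElim v⟩⟩
  obtain ⟨v0⟩ := hV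
  have hr0 : (0:ℝ) < r := by linarith
  have hlam0 : lam ≠ 0 := by
    intro h; rw [h] at hr; norm_num at hr; linarith
  have hlam : 0 < lam := by
    rcases lt_trichotomy lam 0 with h | h | h
    · exfalso
      have h1 := heig v0
      have h2 : 0 ≤ ∑ h ∈ G.neighborFinset v0, y h :=
        Finset.sum_nonneg fun h _ => (hy h).le
      nlinarith [hy v0]
    · exact absurd h hlam0
    · exact h
  have hsqrt : Real.sqrt r = lam := by
    rw [hr, Real.sqrt_sq hlam.le]
  have hrr : lam * lam = r := by rw [hr]; ring
  -- bounds for rho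
  have hbnd : ∀ n, 0 ≤ rho n ∧ rho n < 2 := by
    intro n
    induction n with
    | zero => constructor <;> rw [hrho0] <;> norm_num
    | succ n ih =>
      have hpos : 0 < r - rho n := by linarith [ih.2]
      rw [hrho n]
      refine ⟨div_nonneg hr0.le hpos.le, ?_⟩
      rw [div_lt_iff₀ hpos]
      linarith [ih.1]
  have hrpos : ∀ n, 0 < rho (n + 1) := by
    intro n
    rw [hrho n]
    exact div_pos hr0 (by linarith [(hbnd n).2])
  -- the two one-step lemmas
  have hA : ∀ a b : ℝ, partCox G odd (fun v => a * ycirc v + b * ybul v)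
      = fun v => a * ycirc v + (a * lam - b) * ybul v := by
    intro a b
    funext v
    by_cases hv : odd v
    · simp only [partCox, if_pos hv]
      have h1 : ∀ h ∈ G.neighborFinset v, a * ycirc h + b * ybul h = a * y h := by
        intro h hh
        have hadj : G.Adj v h := by rwa [SimpleGraph.mem_neighborFinset] at hh
        have hne : ¬ odd h := (hbip v h hadj).mp hv
        rw [hycirc h, hybul h, if_neg hne, if_neg hne]; ring
      rw [Finset.sum_congr rfl h1, ← Finset.mul_sum, ← heig v,
        hycirc v, hybul v, if_pos hv, if_pos hv]
      ring
    · simp only [partCox, if_neg hv]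
      rw [hybul v, if_neg hv]; ring
  have hB : ∀ a b : ℝ, partCox G (fun v => ¬ odd v) (fun v => a * ycirc v + b * ybul v)
      = fun v => (b * lam - a) * ycirc v + b * ybul v := by
    intro a b
    funext v
    by_cases hv : odd v
    · simp only [partCox, if_neg (not_not_intro hv)]
      rw [hycirc v, if_pos hv]; ring
    · simp only [partCox, if_pos hv]
      have h1 : ∀ h ∈ G.neighborFinset v, a * ycirc h + b * ybul h = b * y h := by
        intro h hh
        have hadj : G.Adj v h := by rwa [SimpleGraph.mem_neighborFinset] at hh
        have hne : odd h := by
          by_contra hc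
          exact hv ((hbip v h hadj).mpr hc)
        rw [hycirc h, hybul h, if_pos hne, if_pos hne]; ring
      rw [Finset.sum_congr rfl h1, ← Finset.mul_sum, ← heig v,
        hycirc v, hybul v, if_neg hv, if_neg hv]
      ring
  -- unfolding lemma for coefAux
  have hstep : ∀ k, coefAux lam (k + 1) =
      if Even k then
        ((coefAux lam k).1, (coefAux lam k).1 * lam - (coefAux lam k).2)
      else
        ((coefAux lam k).2 * lam - (coefAux lam k).1, (coefAux lam k).2) :=
    fun k => rfl
  have heven : ∀ s : ℕ, Even (2 * s) := fun s => ⟨s, by ring⟩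
  have hodd : ∀ s : ℕ, ¬ Even (2 * s + 1) := by
    intro s
    simp [Nat.even_add_one, heven s]
  have hstepE : ∀ s : ℕ, coefAux lam (2 * s + 1) =
      ((coefAux lam (2 * s)).1,
       (coefAux lam (2 * s)).1 * lam - (coefAux lam (2 * s)).2) := by
    intro s; rw [hstep, if_pos (heven s)]
  have hstepO : ∀ s : ℕ, coefAux lam (2 * s + 2) =
      ((coefAux lam (2 * s + 1)).2 * lam - (coefAux lam (2 * s + 1)).1,
       (coefAux lam (2 * s + 1)).2) := by
    intro s
    have : 2 * s + 2 = (2 * s + 1) + 1 := rfl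
    rw [this, hstep, if_neg (hodd s)]
  -- coxPos in terms of coefAux
  have hC : ∀ k, coxPos G odd k ycirc
      = fun v => (coefAux lam k).1 * ycirc v + (coefAux lam k).2 * ybul v := by
    intro k
    induction k with
    | zero =>
      funext v
      simp [coxPos, coefAux]
    | succ k ih =>
      have hrw : coxPos G odd (k + 1) ycirc
          = (if Even k then partCox G odd else partCox G (fun v => ¬ odd v))
              (coxPos G odd k ycirc) := rfl
      rw [hrw, ih]
      by_cases hk : Even k
      · rw [if_pos hk, hA, hstep k, if_pos hk]
      · rw [if_neg hk, hB, hstep k, if_neg hk]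
  -- the key arithmetic facts
  have hD : ∀ s : ℕ,
      ((coefAux lam (2 * s + 1)).1 ≠ 0 ∧
        rho (2 * s + 1) * (coefAux lam (2 * s + 1)).2
          = (coefAux lam (2 * s + 1)).1 * lam) ∧
      ((coefAux lam (2 * s + 2)).1 ≠ 0 ∧
        lam * (coefAux lam (2 * s + 2)).2
          = (coefAux lam (2 * s + 2)).1 * rho (2 * s + 2)) := by
    intro s
    induction s with
    | zero =>
      have h1 : rho 1 = 1 := by
        rw [show (1:ℕ) = 0 + 1 from rfl, hrho 0, hrho0, sub_zero, div_self hr0.ne']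
      have h2 : rho 2 = r / (r - 1) := by
        rw [show (2:ℕ) = 1 + 1 from rfl, hrho 1, h1]
      have e0 : coefAux lam 0 = (1, 0) := rfl
      have e1 : coefAux lam (2 * 0 + 1) = (1, lam) := by
        rw [hstepE 0]; norm_num [e0]
      have e2 : coefAux lam (2 * 0 + 2) = (lam * lam - 1, lam) := by
        rw [hstepO 0, e1]
      refine ⟨⟨?_, ?_⟩, ⟨?_, ?_⟩⟩
      · rw [e1]; norm_num
      · rw [e1]; norm_num [h1]
      · rw [e2]; simp only; nlinarith
      · rw [e2]; simp only
        rw [show (2 * 0 + 2 : ℕ) = 2 from rfl, h2]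
        have hne : r - 1 ≠ 0 := by nlinarith
        field_simp
        nlinarith
    | succ s ih =>
      obtain ⟨⟨_, _⟩, ⟨ha2, hb2⟩⟩ := ih
      set a2 := (coefAux lam (2 * s + 2)).1 with ha2def
      set b2 := (coefAux lam (2 * s + 2)).2 with hb2def
      have hidx1 : 2 * (s + 1) + 1 = (2 * (s + 1)) + 1 := rfl
      have hidx0 : 2 * (s + 1) = 2 * s + 2 := by ring
      have e3 : coefAux lam (2 * (s + 1) + 1) = (a2, a2 * lam - b2) := by
        rw [hstepE (s + 1), hidx0]
      have e4 : coefAux lam (2 * (s + 1) + 2) =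
          ((a2 * lam - b2) * lam - a2, a2 * lam - b2) := by
        rw [hstepO (s + 1), e3]
      -- rho values
      have hb : rho (2 * s + 2) < 2 := (hbnd (2 * s + 2)).2
      have hb' : 0 ≤ rho (2 * s + 2) := (hbnd (2 * s + 2)).1
      have hd1 : (0:ℝ) < r - rho (2 * s + 2) := by linarith
      have hr3 : rho (2 * (s + 1) + 1) = r / (r - rho (2 * s + 2)) := by
        rw [show 2 * (s + 1) + 1 = (2 * s + 2) + 1 from by ring, hrho]
      have hq3 : rho (2 * (s + 1) + 1) * (r - rho (2 * s + 2)) = r := by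
        rw [hr3]; field_simp
      have hdq : (0:ℝ) < r - rho (2 * (s + 1) + 1) := by
        linarith [(hbnd (2 * (s + 1) + 1)).2]
      have hrho4 : rho (2 * (s + 1) + 2) = r / (r - rho (2 * (s + 1) + 1)) :=
        hrho (2 * (s + 1) + 1)
      refine ⟨⟨?_, ?_⟩, ⟨?_, ?_⟩⟩
      · rw [e3]; exact ha2
      · rw [e3]; simp only
        rw [hr3, div_mul_eq_mul_div, div_eq_iff hd1.ne']
        linear_combination (-lam) * hb2 + b2 * hrr
      · rw [e4]; simp only
        intro hc
        have hz : a2 * (r - rho (2 * s + 2) - 1) = 0 := by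
          linear_combination hc + (-a2) * hrr + hb2
        have hd2 : r - rho (2 * s + 2) - 1 ≠ 0 := by linarith
        rcases mul_eq_zero.mp hz with h | h
        · exact ha2 h
        · exact hd2 h
      · rw [e4]; simp only
        rw [hrho4, ← mul_div_assoc, eq_div_iff hdq.ne']
        linear_combination (-a2) * hq3 + (-a2 * rho (2 * (s + 1) + 1)) * hrr
          + rho (2 * (s + 1) + 1) * hb2
  -- assemble
  intro t ht
  obtain ⟨s, rfl⟩ : ∃ s, t = s + 1 := ⟨t - 1, by omega⟩
  have hi1 : 2 * (s + 1) - 1 = 2 * s + 1 := by omega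
  have hi2 : 2 * (s + 1) = 2 * s + 2 := by ring
  obtain ⟨⟨ha1, hb1⟩, ⟨ha2, hb2⟩⟩ := hD s
  have hrho1 : 0 < rho (2 * s + 1) := hrpos (2 * s)
  constructor
  · refine ⟨(coefAux lam (2 * s + 1)).1, ha1, ?_⟩
    rw [hi1, hC]
    funext v
    simp only [Pi.smul_apply, Pi.add_apply, smul_eq_mul, hsqrt]
    have hbval : (coefAux lam (2 * s + 1)).2
        = (coefAux lam (2 * s + 1)).1 * lam / rho (2 * s + 1) := by
      field_simp
      linarith [hb1]
    rw [hbval]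
    field_simp
  · refine ⟨(coefAux lam (2 * s + 2)).1, ha2, ?_⟩
    rw [hi2, hC]
    funext v
    simp only [Pi.smul_apply, Pi.add_apply, smul_eq_mul, hsqrt]
    have hbval : (coefAux lam (2 * s + 2)).2
        = (coefAux lam (2 * s + 2)).1 * rho (2 * s + 2) / lam := by
      field_simp
      linarith [hb2]
    rw [hbval]
    field_simp
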